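/- arXiv:2602.00693 — 5 statements merged into one kernel-verified Lean document; each statement's English description precedes it below -/
import Mathlib

section
/- Assume every hidden node of G lies on a directed path from an input node to an output node. Then for every c ∈ ℝ^{Ṽ} the invariant set H_G(c) is nonempty; equivalently, for every c ∈ ℝ^{Ṽ} there exists x ∈ ℝ^E with x ≥ 0 entrywise and B̃x = c, i.e., the convex cone generated by the columns of B̃ is all of ℝ^{Ṽ}. -/
noncomputable section

open Matrix Finset

/-- A finite DAG modeling a feed-forward neural architecture: nodes `V`,
edges `edges`, input nodes `VI` (no incoming edges), output nodes `VO`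
(no outgoing edges), with `VI` and `VO` disjoint. -/
structure DagNet where
  V : Type
  [fintypeV : Fintype V]
  [decEqV : DecidableEq V]
  edges : Finset (V × V)
  VI : Finset V
  VO : Finset V
  acyclic : ∀ v : V, ¬ Relation.TransGen (fun a b : V => (a, b) ∈ edges) v v
  no_edge_into_input : ∀ e ∈ edges, Prod.snd e ∉ VI
  no_edge_from_output : ∀ e ∈ edges, Prod.fst e ∉ VO
  io_disjoint : Disjoint VI VO

attribute [instance] DagNet.fintypeV DagNet.decEqV

namespace DagNet

variable (G : DagNet)

/-- The hidden nodes `Ṽ = V \ (V_I ∪ V_O)`. -/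
def hidden : Finset G.V := Finset.univ \ (G.VI ∪ G.VO)

/-- The type of hidden nodes. -/
abbrev Hidden : Type := {v : G.V // v ∈ G.hidden}

/-- The type of edges. -/
abbrev Edge : Type := {e : G.V × G.V // e ∈ G.edges}

/-- The incidence matrix `B̃` of `G` restricted to hidden rows:
`B̃_{v,(i,j)} = 1` if `v = j`, `-1` if `v = i`, `0` otherwise. -/
def B : Matrix G.Hidden G.Edge ℝ :=
  Matrix.of fun v e =>
    if (e : G.V × G.V).2 = (v : G.V) then 1
    else if (e : G.V × G.V).1 = (v : G.V) then -1 else 0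

/-- The rescaling action `T^v_α`: multiplies by `α` the weight of every edge
entering `v`, by `α⁻¹` the weight of every edge leaving `v`, and leaves the
other coordinates unchanged. -/
def rescale (v : G.V) (α : ℝ) (θ : EuclideanSpace ℝ G.Edge) :
    EuclideanSpace ℝ G.Edge :=
  WithLp.toLp 2 fun (e : G.Edge) => if (e : G.V × G.V).2 = v then α * θ e
    else if (e : G.V × G.V).1 = v then α⁻¹ * θ e else θ e

/-- `Reaches a b` iff there is a directed path (possibly trivial) from `a` to `b`. -/
def Reaches (a b : G.V) : Prop :=
  Relation.ReflTransGen (fun x y : G.V => (x, y) ∈ G.edges) a b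

/-- The invariant set `H_G(c) = {θ : B̃ θ² = c}` inside Euclidean space `ℝ^E`. -/
def invariantSet (c : G.Hidden → ℝ) : Set (EuclideanSpace ℝ G.Edge) :=
  {θ | G.B.mulVec (fun e => θ e ^ 2) = c}

/-- `u : Fin (k+1) → V` is a directed path in `G`. -/
def IsPathFun {k : ℕ} (u : Fin (k + 1) → G.V) : Prop :=
  ∀ i : Fin k, (u i.castSucc, u i.succ) ∈ G.edges

/-- Pure ancestors of `v`: hidden ancestors `w` of `v` such that every directed
path from `w` to an output node passes through `v` (this contains `v` itself
whenever `v` is hidden). -/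
def pureAnc (v : G.V) : Set G.V :=
  {w | w ∈ G.hidden ∧ G.Reaches w v ∧
    ∀ (k : ℕ) (u : Fin (k + 1) → G.V), G.IsPathFun u → u 0 = w →
      u (Fin.last k) ∈ G.VO → ∃ i, u i = v}

/-- Pure descendants of `v`: hidden descendants `w` of `v` such that every
directed path from an input node to `w` passes through `v`. -/
def pureDesc (v : G.V) : Set G.V :=
  {w | w ∈ G.hidden ∧ G.Reaches v w ∧
    ∀ (k : ℕ) (u : Fin (k + 1) → G.V), G.IsPathFun u → u (Fin.last k) = w →
      u 0 ∈ G.VI → ∃ i, u i = v}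

/-- An out-bottleneck: a hidden node with exactly one outgoing edge. -/
def OutBottleneck (v : G.V) : Prop :=
  v ∈ G.hidden ∧ (G.edges.filter (fun e => e.1 = v)).card = 1

/-- An in-bottleneck: a hidden node with exactly one incoming edge. -/
def InBottleneck (v : G.V) : Prop :=
  v ∈ G.hidden ∧ (G.edges.filter (fun e => e.2 = v)).card = 1

/-- The projection sending each hidden node to itself and each
input/output node to the glued point `⋆ = none`. -/
def pi (v : G.V) : Option G.Hidden :=
  if h : v ∈ G.hidden then some ⟨v, h⟩ else none

/-- The undirected graph on `Ṽ ⊔ {⋆}` with an edge between `π(u)` and `π(w)`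
for each edge `(u,w)` of `G` with nonzero weight. -/
def quotGraph (θ : G.Edge → ℝ) : SimpleGraph (Option G.Hidden) :=
  SimpleGraph.fromRel (fun a b => ∃ e : G.Edge, θ e ≠ 0 ∧
    a = G.pi (e : G.V × G.V).1 ∧ b = G.pi (e : G.V × G.V).2)

end DagNet

/- A flow of one unit along a directed path from `a` to `b` is a nonnegative edge vector whose
divergence vanishes at every interior node of the path; so the cone spanned by the columns of `B̃`
contains `e_v` (flow from an input node to `v`) and `-e_v` (flow from `v` to an output node) for
every hidden `v`, and is therefore all of `ℝ^Ṽ`. Square roots of a nonnegative solution of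
`B̃ x = c` then give a point of `H_G(c)`. -/

theorem Matrix.exists_nonneg_mulVec_eq_of_forall_single {m n R : Type*} [Fintype m]
    [DecidableEq m] [Fintype n] [NonUnitalNonAssocSemiring R] [PartialOrder R]
    [IsOrderedAddMonoid R] (M : Matrix m n R)
    (h : ∀ i t, ∃ x, 0 ≤ x ∧ M *ᵥ x = Pi.single i t) (c : m → R) :
    ∃ x, 0 ≤ x ∧ M *ᵥ x = c := by
  choose x hx_nonneg hMx using h
  refine ⟨∑ i, x i (c i), Finset.sum_nonneg fun i _ => hx_nonneg i (c i), ?_⟩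
  simp only [Matrix.mulVec_sum, hMx, Finset.univ_sum_single]

namespace DagNet

variable (G : DagNet)

def hiddenSingle (a : G.V) : G.Hidden → ℝ := fun v => if (v : G.V) = a then 1 else 0

lemma hiddenSingle_coe (v : G.Hidden) : G.hiddenSingle v = Pi.single v 1 := by
  ext w
  simp only [hiddenSingle, Pi.single_apply, ← Subtype.ext_iff]

lemma hiddenSingle_of_mem_union {a : G.V} (ha : a ∈ G.VI ∪ G.VO) : G.hiddenSingle a = 0 := by
  ext v
  have hv : (v : G.V) ≠ a := by
    rintro rfl
    exact (mem_sdiff.1 v.2).2 ha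
  simp [hiddenSingle, hv]

lemma fst_ne_snd_of_mem_edges {a b : G.V} (he : (a, b) ∈ G.edges) : a ≠ b := by
  rintro rfl
  exact G.acyclic a (.single he)

lemma B_mulVec_single_one (e : G.Edge) :
    G.B *ᵥ Pi.single e 1 = G.hiddenSingle e.1.2 - G.hiddenSingle e.1.1 := by
  obtain ⟨⟨a, b⟩, he⟩ := e
  have hab := G.fst_ne_snd_of_mem_edges he
  ext v
  rw [Matrix.mulVec_single_one]
  simp only [B, hiddenSingle, col_apply, of_apply, Pi.sub_apply]
  grind

theorem exists_nonneg_mulVec_eq_of_reaches {a b : G.V} (h : G.Reaches a b) :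
    ∃ x, 0 ≤ x ∧ G.B *ᵥ x = G.hiddenSingle b - G.hiddenSingle a := by
  induction h with
  | refl => exact ⟨0, le_rfl, by simp⟩
  | @tail p q _ hpq ih =>
    obtain ⟨x, hx_nonneg, hBx⟩ := ih
    refine ⟨x + Pi.single ⟨(p, q), hpq⟩ 1,
      add_nonneg hx_nonneg (Pi.single_nonneg.2 zero_le_one), ?_⟩
    rw [Matrix.mulVec_add, hBx, B_mulVec_single_one]
    abel

theorem exists_nonneg_mulVec_eq_single
    (hpath : ∀ v ∈ G.hidden, ∃ i ∈ G.VI, ∃ o ∈ G.VO, G.Reaches i v ∧ G.Reaches v o)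
    (v : G.Hidden) (t : ℝ) : ∃ x, 0 ≤ x ∧ G.B *ᵥ x = Pi.single v t := by
  obtain ⟨i, hi, o, ho, hiv, hvo⟩ := hpath v v.2
  rcases le_or_gt 0 t with ht | ht
  · obtain ⟨x, hx_nonneg, hBx⟩ := G.exists_nonneg_mulVec_eq_of_reaches hiv
    refine ⟨t • x, smul_nonneg ht hx_nonneg, ?_⟩
    rw [Matrix.mulVec_smul, hBx, hiddenSingle_coe,
      hiddenSingle_of_mem_union _ (mem_union_left _ hi), sub_zero,
      ← Pi.single_smul', smul_eq_mul, mul_one]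
  · obtain ⟨x, hx_nonneg, hBx⟩ := G.exists_nonneg_mulVec_eq_of_reaches hvo
    refine ⟨(-t) • x, smul_nonneg (neg_nonneg.2 ht.le) hx_nonneg, ?_⟩
    rw [Matrix.mulVec_smul, hBx, hiddenSingle_coe,
      hiddenSingle_of_mem_union _ (mem_union_right _ ho), zero_sub, smul_neg,
      neg_smul, neg_neg, ← Pi.single_smul', smul_eq_mul, mul_one]

theorem invariantSet_nonempty_of_nonneg_mulVec_eq {c : G.Hidden → ℝ} {x : G.Edge → ℝ}
    (hx_nonneg : 0 ≤ x) (hBx : G.B *ᵥ x = c) : (G.invariantSet c).Nonempty := by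
  refine ⟨WithLp.toLp 2 fun e => √(x e), ?_⟩
  change G.B *ᵥ (fun e => √(x e) ^ 2) = c
  simpa only [Real.sq_sqrt (hx_nonneg _)] using hBx

end DagNet

/-- if every hidden node lies on a directed path from an input
node to an output node, then for every `c` the invariant set `H_G(c)` is
nonempty; equivalently there is an entrywise-nonnegative `x` with `B̃ x = c`,
i.e. the convex cone generated by the columns of `B̃` is all of `ℝ^Ṽ`. -/
theorem statement2 (G : DagNet)
    (hpath : ∀ v ∈ G.hidden, ∃ i ∈ G.VI, ∃ o ∈ G.VO,
      G.Reaches i v ∧ G.Reaches v o)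
    (c : G.Hidden → ℝ) :
    (G.invariantSet c).Nonempty ∧
      ∃ x : G.Edge → ℝ, (∀ e, 0 ≤ x e) ∧ G.B.mulVec x = c := by
  obtain ⟨x, hx_nonneg, hBx⟩ :=
    G.B.exists_nonneg_mulVec_eq_of_forall_single (G.exists_nonneg_mulVec_eq_single hpath) c
  exact ⟨G.invariantSet_nonempty_of_nonneg_mulVec_eq hx_nonneg hBx, x, hx_nonneg, hBx⟩
end
end

section
/- Assume every hidden node of G lies on a directed path from an input node to an output node, and assume G has no bottleneck nodes, i.e., every hidden node has at least two incoming edges and at least two outgoing edges. Then for every c ∈ ℝ^{Ṽ}, the invariant set H_G(c) is a connected subset of ℝ^E. -/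
noncomputable section

open Matrix Finset

/-!
Write `x²` for the coordinatewise square. The set `{x | A x² = c}` is path connected as soon as
it is nonempty and every coordinate `e` admits a kernel vector `d` of `A` with `d e = -1` and
`d ≥ 0` elsewhere: two nonnegative points are joined by `t ↦ √((1 - t) x² + t y²)`, and the sign
of `x e` is reversed by moving `x²` along `x² + λ d`, which lets `x e` pass through `0` while the
other coordinates keep their signs.

For the incidence matrix `B̃` such a `d` is `p + q - 1_e`, where `p` is a nonnegative flow from an
input into the head of `e` through a second incoming edge and `q` one from the tail of `e` to an
output through a second outgoing edge; acyclicity keeps `e` out of the support of both. Flows from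
inputs and to outputs also show that `B̃` maps the nonnegative orthant onto `ℝ^Ṽ`, so `H_G(c)` is
nonempty.
-/

def signedSqrtAddSq (a δ : ℝ) : ℝ :=
  if a < 0 then -√(a ^ 2 + δ) else √(a ^ 2 + δ)

lemma signedSqrtAddSq_sq (a : ℝ) {δ : ℝ} (hδ : 0 ≤ δ) : signedSqrtAddSq a δ ^ 2 = a ^ 2 + δ := by
  unfold signedSqrtAddSq
  split_ifs <;> simp [Real.sq_sqrt (by positivity : 0 ≤ a ^ 2 + δ)]

@[simp] lemma signedSqrtAddSq_zero (a : ℝ) : signedSqrtAddSq a 0 = a := by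
  unfold signedSqrtAddSq
  split_ifs with h
  · simp [Real.sqrt_sq_eq_abs, abs_of_neg h]
  · simp [Real.sqrt_sq_eq_abs, abs_of_nonneg (not_lt.1 h)]

lemma continuous_signedSqrtAddSq (a : ℝ) : Continuous (signedSqrtAddSq a) := by
  unfold signedSqrtAddSq
  split_ifs <;> fun_prop

namespace Matrix

variable {m n : Type*} [Fintype n] (A : Matrix m n ℝ)

def sqLevelSet (c : m → ℝ) : Set (n → ℝ) := {x | A *ᵥ x ^ 2 = c}

variable {A}

lemma sqrt_mem_sqLevelSet {x : n → ℝ} (hx : 0 ≤ x) :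
    (fun f => √(x f)) ∈ A.sqLevelSet (A *ᵥ x) := by
  simp only [sqLevelSet, Set.mem_ofPred_eq]
  congr 1
  ext f
  simp [Real.sq_sqrt (hx f)]

lemma joinedIn_sqLevelSet_of_nonneg {c : m → ℝ} {x y : n → ℝ} (hx : x ∈ A.sqLevelSet c)
    (hy : y ∈ A.sqLevelSet c) (hx0 : 0 ≤ x) (hy0 : 0 ≤ y) :
    JoinedIn (A.sqLevelSet c) x y := by
  let γ : Path x y :=
    { toFun t f := √((1 - t) * x f ^ 2 + t * y f ^ 2)
      continuous_toFun := by fun_prop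
      source' := by ext f; simp [Real.sqrt_sq (hx0 f)]
      target' := by ext f; simp [Real.sqrt_sq (hy0 f)] }
  refine ⟨γ, fun t => ?_⟩
  have hsq : (γ t) ^ 2 = (1 - (t : ℝ)) • x ^ 2 + (t : ℝ) • y ^ 2 := by
    ext f
    have := t.2.1; have := t.2.2
    simp only [Pi.pow_apply, Pi.add_apply, Pi.smul_apply, smul_eq_mul]
    exact Real.sq_sqrt (by nlinarith [sq_nonneg (x f), sq_nonneg (y f)])
  simp only [sqLevelSet, Set.mem_ofPred_eq] at hx hy ⊢
  rw [hsq, mulVec_add, mulVec_smul, mulVec_smul, hx, hy, ← add_smul, sub_add_cancel, one_smul]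

lemma joinedIn_sqLevelSet_update_neg [DecidableEq n] {c : m → ℝ} {x : n → ℝ}
    (hx : x ∈ A.sqLevelSet c) {e : n} {d : n → ℝ} (hd : A *ᵥ d = 0) (hde : d e = -1)
    (hd0 : ∀ f ≠ e, 0 ≤ d f) :
    JoinedIn (A.sqLevelSet c) x (Function.update x e (-x e)) := by
  let γ : Path x (Function.update x e (-x e)) :=
    { toFun t f := if f = e then (1 - 2 * t) * x e
        else signedSqrtAddSq (x f) (4 * t * (1 - t) * x e ^ 2 * d f)
      continuous_toFun := by
        refine continuous_pi fun f => ?_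
        split_ifs
        · fun_prop
        · exact (continuous_signedSqrtAddSq _).comp (by fun_prop)
      source' := by ext f; split_ifs <;> simp_all
      target' := by ext f; split_ifs <;> simp_all; ring }
  refine ⟨γ, fun t => ?_⟩
  -- `(1 - 2t)² = 1 - 4t(1 - t)`: the squares move along `x² + 4t(1 - t) x_e² d`
  have hsq : (γ t) ^ 2 = x ^ 2 + (4 * t * (1 - t) * x e ^ 2 : ℝ) • d := by
    ext f
    have := t.2.1; have := t.2.2
    simp only [γ, Path.coe_mk_mk, Pi.pow_apply, Pi.add_apply, Pi.smul_apply, smul_eq_mul]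
    split_ifs with hf
    · subst hf; rw [hde]; ring
    · exact signedSqrtAddSq_sq _ (mul_nonneg (by positivity) (hd0 f hf))
  simp only [sqLevelSet, Set.mem_ofPred_eq] at hx ⊢
  rw [hsq, mulVec_add, mulVec_smul, hx, hd, smul_zero, add_zero]

lemma joinedIn_sqLevelSet_abs
    (hA : ∀ e, ∃ d : n → ℝ, A *ᵥ d = 0 ∧ d e = -1 ∧ ∀ f ≠ e, 0 ≤ d f)
    {c : m → ℝ} {x : n → ℝ} (hx : x ∈ A.sqLevelSet c) :
    JoinedIn (A.sqLevelSet c) x |x| := by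
  classical
  suffices ∀ s : Finset n, JoinedIn (A.sqLevelSet c) x (fun f => if f ∈ s then |x f| else x f) by
    convert this Finset.univ using 1; ext f; simp
  intro s
  induction s using Finset.induction_on with
  | empty => simpa using JoinedIn.refl hx
  | insert a s ha ih =>
    obtain ⟨d, hd, hda, hd0⟩ := hA a
    refine ih.trans ?_
    by_cases hxa : 0 ≤ x a
    · convert JoinedIn.refl ih.mem.2 using 2 with f
      by_cases hf : f = a <;> simp [hf, ha, abs_of_nonneg hxa]
    · convert joinedIn_sqLevelSet_update_neg ih.mem.2 hd hda hd0 using 1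
      ext f
      by_cases hf : f = a <;> simp [hf, ha, abs_of_neg (not_le.1 hxa)]

lemma isPathConnected_sqLevelSet
    (hA : ∀ e, ∃ d : n → ℝ, A *ᵥ d = 0 ∧ d e = -1 ∧ ∀ f ≠ e, 0 ≤ d f)
    {c : m → ℝ} (hne : (A.sqLevelSet c).Nonempty) :
    IsPathConnected (A.sqLevelSet c) := by
  refine isPathConnected_iff.2 ⟨hne, fun x hx y hy => ?_⟩
  have habs : ∀ z ∈ A.sqLevelSet c, |z| ∈ A.sqLevelSet c := fun z hz =>
    (joinedIn_sqLevelSet_abs hA hz).mem.2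
  exact ((joinedIn_sqLevelSet_abs hA hx).trans (joinedIn_sqLevelSet_of_nonneg (habs x hx)
    (habs y hy) (abs_nonneg x) (abs_nonneg y))).trans (joinedIn_sqLevelSet_abs hA hy).symm

end Matrix

namespace DagNet

variable (G : DagNet)

def nodeVec (w : G.V) : G.Hidden → ℝ := fun v => if (v : G.V) = w then 1 else 0

variable {G}

lemma nodeVec_eq_zero {w : G.V} (hw : w ∉ G.hidden) : G.nodeVec w = 0 := by
  ext v
  exact if_neg fun (h : (v : G.V) = w) => hw (h ▸ v.2)

lemma mem_hidden_of_notMem {x : G.V} (hI : x ∉ G.VI) (hO : x ∉ G.VO) : x ∈ G.hidden := by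
  simp [hidden, hI, hO]

lemma notMem_hidden_of_mem_VI {x : G.V} (hx : x ∈ G.VI) : x ∉ G.hidden := by
  simp [hidden, hx]

lemma notMem_hidden_of_mem_VO {x : G.V} (hx : x ∈ G.VO) : x ∉ G.hidden := by
  simp [hidden, hx]

lemma ne_of_mem_edges {e : G.V × G.V} (he : e ∈ G.edges) : e.1 ≠ e.2 := by
  obtain ⟨a, b⟩ := e
  rintro (rfl : a = b)
  exact G.acyclic a (.single he)

lemma B_mulVec_single (e : G.Edge) :
    G.B *ᵥ Pi.single e 1 = G.nodeVec e.1.2 - G.nodeVec e.1.1 := by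
  ext v
  have hne := ne_of_mem_edges e.2
  simp only [mulVec_single_one, col_apply, B, of_apply, nodeVec, Pi.sub_apply]
  by_cases h2 : e.1.2 = v <;> by_cases h1 : e.1.1 = v <;> simp_all [eq_comm]

lemma exists_flow {u w : G.V} (h : G.Reaches u w) :
    ∃ f : G.Edge → ℝ, 0 ≤ f ∧ (∀ e, f e ≠ 0 → G.Reaches u e.1.1 ∧ G.Reaches e.1.2 w) ∧
      G.B *ᵥ f = G.nodeVec w - G.nodeVec u := by
  induction h using Relation.ReflTransGen.head_induction_on with
  | refl => exact ⟨0, le_rfl, fun e he => absurd rfl he, by simp⟩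
  | @head a b hab hbw ih =>
    obtain ⟨f, hf0, hfsupp, hf⟩ := ih
    let e₀ : G.Edge := ⟨(a, b), hab⟩
    refine ⟨f + Pi.single e₀ 1, add_nonneg hf0 (Pi.single_nonneg.2 zero_le_one),
      fun e he => ?_, ?_⟩
    · by_cases heq : e = e₀
      · subst heq
        exact ⟨.refl, hbw⟩
      · have hfe : f e ≠ 0 := by simpa [heq] using he
        exact ⟨.head hab (hfsupp e hfe).1, (hfsupp e hfe).2⟩
    · rw [mulVec_add, hf, B_mulVec_single]
      abel

lemma exists_input_reaches
    (hpath : ∀ v ∈ G.hidden, ∃ i ∈ G.VI, ∃ o ∈ G.VO, G.Reaches i v ∧ G.Reaches v o)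
    {v : G.V} (hv : v ∉ G.VO) : ∃ i ∈ G.VI, G.Reaches i v := by
  by_cases hvI : v ∈ G.VI
  · exact ⟨v, hvI, .refl⟩
  · obtain ⟨i, hi, -, -, hiv, -⟩ := hpath v (mem_hidden_of_notMem hvI hv)
    exact ⟨i, hi, hiv⟩

lemma exists_reaches_output
    (hpath : ∀ v ∈ G.hidden, ∃ i ∈ G.VI, ∃ o ∈ G.VO, G.Reaches i v ∧ G.Reaches v o)
    {v : G.V} (hv : v ∉ G.VI) : ∃ o ∈ G.VO, G.Reaches v o := by
  by_cases hvO : v ∈ G.VO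
  · exact ⟨v, hvO, .refl⟩
  · obtain ⟨-, -, o, ho, -, hvo⟩ := hpath v (mem_hidden_of_notMem hv hvO)
    exact ⟨o, ho, hvo⟩

lemma exists_nonneg_mulVec_eq_smul_nodeVec
    (hpath : ∀ v ∈ G.hidden, ∃ i ∈ G.VI, ∃ o ∈ G.VO, G.Reaches i v ∧ G.Reaches v o)
    (v : G.Hidden) (r : ℝ) : ∃ x : G.Edge → ℝ, 0 ≤ x ∧ G.B *ᵥ x = r • G.nodeVec v := by
  rcases le_or_gt 0 r with hr | hr
  · obtain ⟨i, hi, hiv⟩ := exists_input_reaches hpath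
      fun hv => notMem_hidden_of_mem_VO hv v.2
    obtain ⟨f, hf0, -, hf⟩ := exists_flow hiv
    refine ⟨r • f, smul_nonneg hr hf0, ?_⟩
    rw [mulVec_smul, hf, nodeVec_eq_zero (notMem_hidden_of_mem_VI hi), sub_zero]
  · obtain ⟨o, ho, hvo⟩ := exists_reaches_output hpath
      fun hv => notMem_hidden_of_mem_VI hv v.2
    obtain ⟨f, hf0, -, hf⟩ := exists_flow hvo
    refine ⟨(-r) • f, smul_nonneg (neg_nonneg.2 hr.le) hf0, ?_⟩
    rw [mulVec_smul, hf, nodeVec_eq_zero (notMem_hidden_of_mem_VO ho), zero_sub, neg_smul_neg]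

lemma exists_nonneg_mulVec_eq
    (hpath : ∀ v ∈ G.hidden, ∃ i ∈ G.VI, ∃ o ∈ G.VO, G.Reaches i v ∧ G.Reaches v o)
    (c : G.Hidden → ℝ) : ∃ x : G.Edge → ℝ, 0 ≤ x ∧ G.B *ᵥ x = c := by
  choose x hx0 hx using fun v => exists_nonneg_mulVec_eq_smul_nodeVec hpath v (c v)
  refine ⟨∑ v, x v, Finset.sum_nonneg fun v _ => hx0 v, ?_⟩
  ext w
  simp [mulVec_sum, hx, nodeVec]

lemma exists_nonneg_mulVec_eq_nodeVec_head
    (hpath : ∀ v ∈ G.hidden, ∃ i ∈ G.VI, ∃ o ∈ G.VO, G.Reaches i v ∧ G.Reaches v o)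
    (hin : ∀ v ∈ G.hidden, 2 ≤ (G.edges.filter (fun e => e.2 = v)).card) (e : G.Edge) :
    ∃ f : G.Edge → ℝ, 0 ≤ f ∧ f e = 0 ∧ G.B *ᵥ f = G.nodeVec e.1.2 := by
  by_cases hb : e.1.2 ∈ G.hidden
  swap
  · exact ⟨0, le_rfl, rfl, by simp [nodeVec_eq_zero hb]⟩
  obtain ⟨⟨a, b⟩, he'mem, he'ne⟩ := Finset.exists_mem_ne (hin _ hb) e.1
  obtain ⟨he', rfl : b = e.1.2⟩ := Finset.mem_filter.1 he'mem
  obtain ⟨i, hi, hia⟩ := exists_input_reaches hpath (G.no_edge_from_output _ he')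
  obtain ⟨g, hg0, hgsupp, hg⟩ := exists_flow hia
  refine ⟨g + Pi.single ⟨_, he'⟩ 1, add_nonneg hg0 (Pi.single_nonneg.2 zero_le_one), ?_, ?_⟩
  · -- a flow through `e` would close the cycle `e.1.2 ⟶ a ⟶ e.1.2`
    have hge : g e = 0 := by_contra fun h => G.acyclic _ (.tail' (hgsupp e h).2 he')
    have hne : e ≠ ⟨_, he'⟩ := fun h => he'ne (congrArg Subtype.val h).symm
    simp [hge, hne]
  · rw [mulVec_add, hg, B_mulVec_single, nodeVec_eq_zero (notMem_hidden_of_mem_VI hi)]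
    abel

lemma exists_nonneg_mulVec_eq_neg_nodeVec_tail
    (hpath : ∀ v ∈ G.hidden, ∃ i ∈ G.VI, ∃ o ∈ G.VO, G.Reaches i v ∧ G.Reaches v o)
    (hout : ∀ v ∈ G.hidden, 2 ≤ (G.edges.filter (fun e => e.1 = v)).card) (e : G.Edge) :
    ∃ f : G.Edge → ℝ, 0 ≤ f ∧ f e = 0 ∧ G.B *ᵥ f = -G.nodeVec e.1.1 := by
  by_cases ha : e.1.1 ∈ G.hidden
  swap
  · exact ⟨0, le_rfl, rfl, by simp [nodeVec_eq_zero ha]⟩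
  obtain ⟨⟨a, b⟩, he'mem, he'ne⟩ := Finset.exists_mem_ne (hout _ ha) e.1
  obtain ⟨he', rfl : a = e.1.1⟩ := Finset.mem_filter.1 he'mem
  obtain ⟨o, ho, hbo⟩ := exists_reaches_output hpath (G.no_edge_into_input _ he')
  obtain ⟨g, hg0, hgsupp, hg⟩ := exists_flow hbo
  refine ⟨g + Pi.single ⟨_, he'⟩ 1, add_nonneg hg0 (Pi.single_nonneg.2 zero_le_one), ?_, ?_⟩
  · -- a flow through `e` would close the cycle `e.1.1 ⟶ b ⟶ e.1.1`
    have hge : g e = 0 := by_contra fun h => G.acyclic _ (.head' he' (hgsupp e h).1)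
    have hne : e ≠ ⟨_, he'⟩ := fun h => he'ne (congrArg Subtype.val h).symm
    simp [hge, hne]
  · rw [mulVec_add, hg, B_mulVec_single, nodeVec_eq_zero (notMem_hidden_of_mem_VO ho)]
    abel

lemma exists_B_mulVec_eq_zero_negative_only_at
    (hpath : ∀ v ∈ G.hidden, ∃ i ∈ G.VI, ∃ o ∈ G.VO, G.Reaches i v ∧ G.Reaches v o)
    (hnb : ∀ v ∈ G.hidden, 2 ≤ (G.edges.filter (fun e => e.2 = v)).card ∧
      2 ≤ (G.edges.filter (fun e => e.1 = v)).card) (e : G.Edge) :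
    ∃ d : G.Edge → ℝ, G.B *ᵥ d = 0 ∧ d e = -1 ∧ ∀ f ≠ e, 0 ≤ d f := by
  obtain ⟨p, hp0, hpe, hp⟩ :=
    exists_nonneg_mulVec_eq_nodeVec_head hpath (fun v hv => (hnb v hv).1) e
  obtain ⟨q, hq0, hqe, hq⟩ :=
    exists_nonneg_mulVec_eq_neg_nodeVec_tail hpath (fun v hv => (hnb v hv).2) e
  refine ⟨p + q - Pi.single e 1, ?_, by simp [hpe, hqe], fun f hf => ?_⟩
  · rw [mulVec_sub, mulVec_add, hp, hq, B_mulVec_single]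
    abel
  · simpa [hf] using add_nonneg (hp0 f) (hq0 f)

end DagNet

/-- if every hidden node lies on a directed path from an input
to an output node and has at least two incoming and two outgoing edges
(no bottleneck nodes), then `H_G(c)` is connected for every `c`. -/
theorem statement6 (G : DagNet)
    (hpath : ∀ v ∈ G.hidden, ∃ i ∈ G.VI, ∃ o ∈ G.VO,
      G.Reaches i v ∧ G.Reaches v o)
    (hnb : ∀ v ∈ G.hidden,
      2 ≤ (G.edges.filter (fun e => e.2 = v)).card ∧
      2 ≤ (G.edges.filter (fun e => e.1 = v)).card)
    (c : G.Hidden → ℝ) :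
    IsConnected (G.invariantSet c) := by
  have hS : G.invariantSet c = PiLp.homeomorph 2 _ ⁻¹' G.B.sqLevelSet c := rfl
  obtain ⟨x, hx0, rfl⟩ := G.exists_nonneg_mulVec_eq hpath c
  rw [hS, Homeomorph.isConnected_preimage]
  exact (isPathConnected_sqLevelSet (G.exists_B_mulVec_eq_zero_negative_only_at hpath hnb)
    ⟨_, sqrt_mem_sqLevelSet hx0⟩).isConnected
end
end

section
/- Assume every hidden node of G lies on a directed path from an input node to an output node. Then for every c ∈ ℝ^{Ṽ}, the invariant set H_G(c) is a connected subset of ℝ^E if and only if for every edge e ∈ E there exists x ∈ ℝ^E with x ≥ 0 entrywise, x_e = 0, and B̃x = c (i.e., the invariant set of the graph with edge e deleted is nonempty for every e). -/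
/-!
Since `θ` enters only through `θ²`, the invariant set is the preimage of the polytope
`P = {x ≥ 0 | B̃ x = c}` under squaring, i.e. the union over all sign patterns `N` of the
images of `P` under the signed square roots `x ↦ ±√x`. Each such sector is a continuous image of
the convex set `P`, hence connected. Flipping the sign of one coordinate `e` moves between
sectors, and two sectors differing only at `e` meet exactly when some point of `P` has `x_e = 0`;
so all sectors are joined as soon as this holds for every `e`. Conversely, if no point of the
invariant set vanishes at `e`, the sign of `θ_e` separates it into two nonempty open pieces.
-/

noncomputable section

open Matrix Finset

section SignedSqrt

variable {ι : Type*}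

def sqPreimage (P : Set (ι → ℝ)) : Set (EuclideanSpace ℝ ι) :=
  {θ | (fun i => θ i ^ 2) ∈ P}

variable [DecidableEq ι]

def signedSqrt (N : Finset ι) (x : ι → ℝ) : EuclideanSpace ℝ ι :=
  WithLp.toLp 2 fun i => if i ∈ N then -√(x i) else √(x i)

theorem continuous_signedSqrt (N : Finset ι) : Continuous (signedSqrt N) := by
  refine (PiLp.continuous_toLp 2 _).comp (continuous_pi fun i => ?_)
  have : Continuous fun x : ι → ℝ => √(x i) := Real.continuous_sqrt.comp (continuous_apply i)
  split_ifs
  exacts [this.neg, this]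

theorem signedSqrt_sq {x : ι → ℝ} (hx : ∀ i, 0 ≤ x i) (N : Finset ι) :
    (fun i => signedSqrt N x i ^ 2) = x := by
  funext i
  simp only [signedSqrt]
  split_ifs <;> simp [Real.sq_sqrt (hx i)]

theorem signedSqrt_insert_of_eq_zero {x : ι → ℝ} {j : ι} (hj : x j = 0) (N : Finset ι) :
    signedSqrt (insert j N) x = signedSqrt N x := by
  ext i
  by_cases hi : i = j
  · subst hi; simp [signedSqrt, hj]
  · simp [signedSqrt, Finset.mem_insert, hi]

theorem signedSqrt_sq_self [Fintype ι] (θ : EuclideanSpace ℝ ι) :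
    signedSqrt {i | θ i < 0} (fun i => θ i ^ 2) = θ := by
  ext i
  simp only [signedSqrt, Real.sqrt_sq_eq_abs, Finset.mem_filter, Finset.mem_univ, true_and]
  split_ifs with h
  · simp [abs_of_neg h]
  · simp [abs_of_nonneg (not_lt.mp h)]

theorem image_signedSqrt_subset_sqPreimage {P : Set (ι → ℝ)} (hP : ∀ x ∈ P, ∀ i, 0 ≤ x i)
    (N : Finset ι) : signedSqrt N '' P ⊆ sqPreimage P := by
  rintro _ ⟨x, hx, rfl⟩
  simpa [sqPreimage, signedSqrt_sq (hP x hx)] using hx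

theorem exists_mem_eq_zero_of_isPreconnected_sqPreimage {P : Set (ι → ℝ)}
    (hS : IsPreconnected (sqPreimage P)) {θ : EuclideanSpace ℝ ι} (hθ : θ ∈ sqPreimage P)
    (j : ι) : ∃ x ∈ P, x j = 0 := by
  have hsq : ∀ i, 0 ≤ θ i ^ 2 := fun i => sq_nonneg _
  have hmem (N : Finset ι) : signedSqrt N (fun i => θ i ^ 2) ∈ sqPreimage P := by
    simpa [sqPreimage, signedSqrt_sq hsq] using hθ
  have hzero : (0 : ℝ) ∈ Set.Icc (signedSqrt {j} (fun i => θ i ^ 2) j)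
      (signedSqrt ∅ (fun i => θ i ^ 2) j) := by
    simp [signedSqrt, Real.sqrt_nonneg]
  obtain ⟨η, hη, hηj⟩ := hS.intermediate_value (hmem {j}) (hmem ∅)
    (PiLp.continuous_apply 2 _ j).continuousOn hzero
  exact ⟨_, hη, by simp [hηj]⟩

theorem image_signedSqrt_subset_connectedComponentIn [Fintype ι] {P : Set (ι → ℝ)}
    (hnonneg : ∀ x ∈ P, ∀ i, 0 ≤ x i) (hP : IsPreconnected P)
    (hzero : ∀ j, ∃ x ∈ P, x j = 0) {x₀ : ι → ℝ} (hx₀ : x₀ ∈ P) (N : Finset ι) :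
    signedSqrt N '' P ⊆ connectedComponentIn (sqPreimage P) (signedSqrt ∅ x₀) := by
  have hsector (N : Finset ι) : IsPreconnected (signedSqrt N '' P) :=
    hP.image _ (continuous_signedSqrt N).continuousOn
  induction N using Finset.induction_on with
  | empty =>
    exact (hsector ∅).subset_connectedComponentIn (Set.mem_image_of_mem _ hx₀)
      (image_signedSqrt_subset_sqPreimage hnonneg ∅)
  | insert j N _ ih =>
    obtain ⟨x, hx, hxj⟩ := hzero j
    have hjoin : signedSqrt (insert j N) x ∈
        connectedComponentIn (sqPreimage P) (signedSqrt ∅ x₀) :=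
      signedSqrt_insert_of_eq_zero hxj N ▸ ih (Set.mem_image_of_mem _ hx)
    rw [connectedComponentIn_eq hjoin]
    exact (hsector _).subset_connectedComponentIn (Set.mem_image_of_mem _ hx)
      (image_signedSqrt_subset_sqPreimage hnonneg _)

theorem isPreconnected_sqPreimage [Fintype ι] {P : Set (ι → ℝ)}
    (hnonneg : ∀ x ∈ P, ∀ i, 0 ≤ x i) (hP : IsPreconnected P)
    (hzero : ∀ j, ∃ x ∈ P, x j = 0) : IsPreconnected (sqPreimage P) := by
  refine isPreconnected_of_forall_pair fun θ hθ θ' hθ' => ?_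
  have hcomp (η : EuclideanSpace ℝ ι) (hη : η ∈ sqPreimage P) :
      η ∈ connectedComponentIn (sqPreimage P) (signedSqrt ∅ (fun i => θ i ^ 2)) :=
    signedSqrt_sq_self η ▸ image_signedSqrt_subset_connectedComponentIn hnonneg hP hzero hθ _
      (Set.mem_image_of_mem _ hη)
  exact ⟨_, connectedComponentIn_subset _ _, hcomp θ hθ, hcomp θ' hθ',
    isPreconnected_connectedComponentIn⟩

theorem isConnected_sqPreimage_iff [Fintype ι] {P : Set (ι → ℝ)}
    (hnonneg : ∀ x ∈ P, ∀ i, 0 ≤ x i) (hP : IsPreconnected P) :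
    IsConnected (sqPreimage P) ↔ P.Nonempty ∧ ∀ j, ∃ x ∈ P, x j = 0 := by
  constructor
  · rintro ⟨⟨θ, hθ⟩, hS⟩
    exact ⟨⟨_, hθ⟩, exists_mem_eq_zero_of_isPreconnected_sqPreimage hS hθ⟩
  · rintro ⟨⟨x, hx⟩, hzero⟩
    exact ⟨⟨_, image_signedSqrt_subset_sqPreimage hnonneg ∅ (Set.mem_image_of_mem _ hx)⟩,
      isPreconnected_sqPreimage hnonneg hP hzero⟩

end SignedSqrt

namespace DagNet

variable (G : DagNet)

def nonnegSolutions (c : G.Hidden → ℝ) : Set (G.Edge → ℝ) :=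
  {x | (∀ e, 0 ≤ x e) ∧ G.B *ᵥ x = c}

theorem invariantSet_eq_sqPreimage (c : G.Hidden → ℝ) :
    G.invariantSet c = sqPreimage (G.nonnegSolutions c) := by
  ext θ
  simp [invariantSet, sqPreimage, nonnegSolutions, sq_nonneg]

theorem convex_nonnegSolutions (c : G.Hidden → ℝ) : Convex ℝ (G.nonnegSolutions c) := by
  rintro x ⟨hx, hxc⟩ y ⟨hy, hyc⟩ a b ha hb hab
  refine ⟨fun e => ?_, ?_⟩
  · exact add_nonneg (mul_nonneg ha (hx e)) (mul_nonneg hb (hy e))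
  · rw [mulVec_add, mulVec_smul, mulVec_smul, hxc, hyc, ← add_smul, hab, one_smul]

theorem reaches_iff_eq_of_isEmpty_edge [IsEmpty G.Edge] {a b : G.V} : G.Reaches a b ↔ b = a :=
  Relation.reflTransGen_iff_eq fun b hab => IsEmpty.false (⟨(a, b), hab⟩ : G.Edge)

theorem isEmpty_hidden_of_isEmpty_edge [IsEmpty G.Edge]
    (hreach : ∀ v ∈ G.hidden, ∃ i ∈ G.VI, G.Reaches i v) : IsEmpty G.Hidden := by
  refine ⟨fun ⟨v, hv⟩ => ?_⟩
  obtain ⟨i, hi, hiv⟩ := hreach v hv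
  rw [reaches_iff_eq_of_isEmpty_edge] at hiv
  subst hiv
  simp [hidden, hi] at hv

end DagNet

/-- `H_G(c)` is connected iff for every edge `e` the invariant
set of the graph with edge `e` deleted is nonempty, i.e. iff for every `e`
there is a nonnegative `x` with `x_e = 0` and `B̃ x = c`. -/
theorem statement8 (G : DagNet)
    (hpath : ∀ v ∈ G.hidden, ∃ i ∈ G.VI, ∃ o ∈ G.VO,
      G.Reaches i v ∧ G.Reaches v o)
    (c : G.Hidden → ℝ) :
    IsConnected (G.invariantSet c) ↔
      ∀ e : G.Edge, ∃ x : G.Edge → ℝ,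
        (∀ e', 0 ≤ x e') ∧ x e = 0 ∧ G.B.mulVec x = c := by
  rw [G.invariantSet_eq_sqPreimage,
    isConnected_sqPreimage_iff (fun _ hx => hx.1) (G.convex_nonnegSolutions c).isPreconnected]
  constructor
  · rintro ⟨-, hzero⟩ e
    obtain ⟨x, ⟨hx, hxc⟩, hxe⟩ := hzero e
    exact ⟨x, hx, hxe, hxc⟩
  · intro hzero
    refine ⟨?_, fun e => ?_⟩
    · rcases isEmpty_or_nonempty G.Edge with _ | ⟨⟨e⟩⟩
      · have := G.isEmpty_hidden_of_isEmpty_edge fun v hv =>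
          (hpath v hv).imp fun _ ⟨hi, _, _, hiv, _⟩ => ⟨hi, hiv⟩
        exact ⟨0, fun _ => le_rfl, funext isEmptyElim⟩
      · obtain ⟨x, hx, -, hxc⟩ := hzero e
        exact ⟨x, hx, hxc⟩
    · obtain ⟨x, hx, hxe, hxc⟩ := hzero e
      exact ⟨x, ⟨hx, hxc⟩, hxe⟩
end
end

section
/- For every θ ∈ ℝ^E, the rank of the matrix B̃·diag(θ) ∈ ℝ^{Ṽ×E} equals |Ṽ| + 1 − CC(G'_θ), where G'_θ is the undirected graph on the vertex set Ṽ ⊔ {⋆} having, for each edge (u, w) ∈ E with θ_{(u,w)} ≠ 0, an edge between π(u) and π(w), with π the map sending each hidden node to itself and each input or output node to ⋆, and CC(G'_θ) is the number of connected components of G'_θ. -/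
noncomputable section

open Matrix Finset

/-! The transpose of `B̃ · diag(θ)` sends a potential `x` on the hidden nodes, extended by `0` at
`⋆`, to the edge function `(u, w) ↦ θ_{(u,w)} (x(π w) - x(π u))`. So its kernel consists of the
potentials that vanish at `⋆` and are constant along the edges of `G'_θ`, that is, of the functions
on the connected components of `G'_θ` that vanish on the component of `⋆`. This space has
dimension `CC(G'_θ) - 1`, and rank–nullity for the transpose gives the formula. -/

theorem Matrix.rank_add_finrank_ker_mulVecLin {m n K : Type*} [Fintype n] [Field K]
    (A : Matrix m n K) :
    A.rank + Module.finrank K (LinearMap.ker A.mulVecLin) = Fintype.card n := by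
  rw [Matrix.rank, LinearMap.finrank_range_add_finrank_ker, Module.finrank_fintype_fun_eq_card]

def Option.extendByZero {α : Type*} (K : Type*) [Semiring K] :
    (α → K) →ₗ[K] (Option α → K) where
  toFun x a := a.elim 0 x
  map_add' x y := by ext (_ | _) <;> simp
  map_smul' c x := by ext (_ | _) <;> simp

namespace SimpleGraph

theorem forall_fromRel_adj_imp_eq_iff {V β : Type*} {r : V → V → Prop} {f : V → β} :
    (∀ a b, (fromRel r).Adj a b → f a = f b) ↔ ∀ a b, r a b → f a = f b := by
  refine ⟨fun h a b hr => ?_, fun h a b ⟨_, hr⟩ => hr.elim (h a b) fun hr => (h b a hr).symm⟩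
  by_cases hab : a = b
  · rw [hab]
  · exact h a b ⟨hab, Or.inl hr⟩

section LocallyConstant

variable {V : Type*} (K : Type*) [Semiring K] (H : SimpleGraph V)

def locallyConstant : Submodule K (V → K) where
  carrier := {y | ∀ a b, H.Adj a b → y a = y b}
  add_mem' hy hz a b hab := by simp [hy a b hab, hz a b hab]
  zero_mem' _ _ _ := rfl
  smul_mem' c y hy a b hab := by simp [hy a b hab]

variable {K H}

@[simp]
theorem mem_locallyConstant {y : V → K} :
    y ∈ H.locallyConstant K ↔ ∀ a b, H.Adj a b → y a = y b :=
  Iff.rfl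

theorem eq_of_mem_locallyConstant_of_reachable {y : V → K} (hy : y ∈ H.locallyConstant K)
    {a b : V} (hab : H.Reachable a b) : y a = y b := by
  obtain ⟨p⟩ := hab
  induction p with
  | nil => rfl
  | cons had _ ih => exact (hy _ _ had).trans ih

end LocallyConstant

section Grounded

variable {α : Type*} (K : Type*) (H : SimpleGraph (Option α))

def groundedOfComponents [CommRing K] : (H.ConnectedComponent → K) →ₗ[K] (α → K) where
  toFun g v := g (H.connectedComponentMk (some v)) - g (H.connectedComponentMk none)
  map_add' g g' := by ext; simp only [Pi.add_apply]; ring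
  map_smul' c g := by ext; simp only [Pi.smul_apply, smul_eq_mul, RingHom.id_apply]; ring

variable [CommRing K]

theorem extendByZero_groundedOfComponents (g : H.ConnectedComponent → K) (a : Option α) :
    Option.extendByZero K (H.groundedOfComponents K g) a =
      g (H.connectedComponentMk a) - g (H.connectedComponentMk none) := by
  cases a <;> simp [Option.extendByZero, groundedOfComponents]

theorem range_groundedOfComponents :
    LinearMap.range (H.groundedOfComponents K) =
      (H.locallyConstant K).comap (Option.extendByZero K) := by
  apply le_antisymm
  · rintro _ ⟨g, rfl⟩ a b hab
    simp only [extendByZero_groundedOfComponents,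
      ConnectedComponent.connectedComponentMk_eq_of_adj hab]
  · intro x hx
    refine ⟨ConnectedComponent.lift (Option.extendByZero K x)
      fun a b p _ => eq_of_mem_locallyConstant_of_reachable hx ⟨p⟩, ?_⟩
    ext v
    exact sub_zero (x v)

theorem ker_groundedOfComponents : LinearMap.ker (H.groundedOfComponents K) = K ∙ 1 := by
  ext g
  rw [LinearMap.mem_ker, Submodule.mem_span_singleton]
  constructor
  · intro hg
    refine ⟨g (H.connectedComponentMk none), funext fun c => ?_⟩
    induction c using ConnectedComponent.ind with
    | h a =>
      cases a with
      | none => simp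
      | some v =>
        have hv := congrFun hg v
        rw [groundedOfComponents, LinearMap.coe_mk, AddHom.coe_mk, Pi.zero_apply,
          sub_eq_zero] at hv
        simpa using hv.symm
  · rintro ⟨c, rfl⟩
    ext v
    simp [groundedOfComponents]

end Grounded

theorem finrank_comap_extendByZero_locallyConstant_add_one {α : Type*} [Finite α]
    (K : Type*) [Field K] (H : SimpleGraph (Option α)) :
    Module.finrank K ((H.locallyConstant K).comap (Option.extendByZero K)) + 1 =
      Nat.card H.ConnectedComponent := by
  have : Fintype H.ConnectedComponent := Fintype.ofFinite _
  have : Nonempty H.ConnectedComponent := ⟨H.connectedComponentMk none⟩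
  rw [← range_groundedOfComponents,
    ← finrank_span_singleton (K := K) (one_ne_zero' (H.ConnectedComponent → K)),
    ← ker_groundedOfComponents,
    LinearMap.finrank_range_add_finrank_ker, Module.finrank_fintype_fun_eq_card,
    Nat.card_eq_fintype_card]

end SimpleGraph

namespace DagNet

variable (G : DagNet)

theorem fst_ne_snd (e : G.Edge) : (e : G.V × G.V).1 ≠ (e : G.V × G.V).2 := by
  obtain ⟨⟨a, b⟩, he⟩ := e
  rintro (rfl : a = b)
  exact G.acyclic a (Relation.TransGen.single he)

theorem sum_ite_eq_extendByZero_pi (x : G.Hidden → ℝ) (w : G.V) :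
    ∑ v : G.Hidden, (if w = (v : G.V) then x v else 0) = Option.extendByZero ℝ x (G.pi w) := by
  by_cases hw : w ∈ G.hidden
  · rw [Fintype.sum_eq_single ⟨w, hw⟩ fun v hv => if_neg fun h => hv (Subtype.ext h.symm)]
    simp [Option.extendByZero, DagNet.pi, hw]
  · rw [Finset.sum_eq_zero fun (v : G.Hidden) _ => if_neg fun (h : w = v) => hw (h ▸ v.2)]
    simp [Option.extendByZero, DagNet.pi, hw]

theorem B_transpose_mulVec_apply (x : G.Hidden → ℝ) (e : G.Edge) :
    (G.Bᵀ *ᵥ x) e = Option.extendByZero ℝ x (G.pi (e : G.V × G.V).2)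
      - Option.extendByZero ℝ x (G.pi (e : G.V × G.V).1) := by
  have hterm : ∀ v : G.Hidden, G.B v e * x v =
      (if (e : G.V × G.V).2 = v then x v else 0) - (if (e : G.V × G.V).1 = v then x v else 0) := by
    intro v
    by_cases h2 : (e : G.V × G.V).2 = v
    · have h1 : (e : G.V × G.V).1 ≠ v := fun h1 => G.fst_ne_snd e (h1.trans h2.symm)
      simp [B, h1, h2]
    · by_cases h1 : (e : G.V × G.V).1 = v <;> simp [B, h1, h2]
  simp only [mulVec, dotProduct, transpose_apply, hterm, Finset.sum_sub_distrib,
    sum_ite_eq_extendByZero_pi]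

theorem ker_transpose_B_mul_diagonal (θ : G.Edge → ℝ) :
    LinearMap.ker (G.B * diagonal θ)ᵀ.mulVecLin =
      ((G.quotGraph θ).locallyConstant ℝ).comap (Option.extendByZero ℝ) := by
  ext x
  simp only [LinearMap.mem_ker, Matrix.mulVecLin_apply, transpose_mul, diagonal_transpose,
    ← mulVec_mulVec, mulVec_diagonal, funext_iff, Pi.zero_apply, B_transpose_mulVec_apply,
    mul_eq_zero, sub_eq_zero, Submodule.mem_comap, SimpleGraph.mem_locallyConstant, quotGraph,
    SimpleGraph.forall_fromRel_adj_imp_eq_iff]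
  constructor
  · rintro h _ _ ⟨e, he, rfl, rfl⟩
    exact ((h e).resolve_left he).symm
  · intro h e
    exact or_iff_not_imp_left.2 fun he => (h _ _ ⟨e, he, rfl, rfl⟩).symm

end DagNet

/-- for every `θ`, the rank of `B̃ · diag(θ)` equals
`|Ṽ| + 1 − CC(G'_θ)`, where `G'_θ` is the undirected graph on `Ṽ ⊔ {⋆}`
obtained from the nonzero-weight edges of `G` by gluing all input and output
nodes into `⋆`. -/
theorem statement11 (G : DagNet) (θ : G.Edge → ℝ) :
    ((G.B * Matrix.diagonal θ).rank : ℤ) =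
      (Fintype.card G.Hidden : ℤ) + 1
        - (Nat.card (G.quotGraph θ).ConnectedComponent : ℤ) := by
  have hrank := (G.B * diagonal θ)ᵀ.rank_add_finrank_ker_mulVecLin
  have hcomponents := (G.quotGraph θ).finrank_comap_extendByZero_locallyConstant_add_one ℝ
  rw [rank_transpose, G.ker_transpose_B_mul_diagonal θ] at hrank
  omega
end
end

section
/- Suppose L : ℝ^E → ℝ is twice continuously differentiable and satisfies L(T^v_α(θ)) = L(θ) for every hidden node v, every α > 0, and every θ ∈ ℝ^E. Let θ : [0,∞) → ℝ^E be a continuously differentiable curve solving the gradient flow θ'(t) = −∇L(θ(t)) for all t ≥ 0. Then the rank of the Jacobian of the invariant set is conserved along the trajectory: rank(B̃·diag(θ(t))) = rank(B̃·diag(θ(0))) for all finite t ≥ 0. -/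
noncomputable section

open Matrix Finset

/-!
For `x ∈ ℝ^Ṽ` put `a = xᵀB̃`; then `x` lies in the left kernel of `B̃ · diag(θ)` iff `a ⊙ θ = 0`.
Differentiating the rescaling invariance at `α = 1` gives `DL(y)(a ⊙ y) = 0` for every `y`, and
differentiating that identity once more shows that `N(t) = ‖a ⊙ θ(t)‖²` satisfies
`N' = 2 D²L(θ)(a ⊙ θ, a ⊙ θ)` along the gradient flow. Hence `|N'| ≤ C N` on `[0, t]`, and
Grönwall's inequality, run forwards and backwards in time, gives `N(t) = 0 ↔ N(0) = 0`:
the left kernels, and therefore the ranks, agree.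
-/

open scoped RealInnerProductSpace
open Set Filter Topology

section Gronwall

variable {F : Type*} [NormedAddCommGroup F] [NormedSpace ℝ F]

lemma eq_zero_iff_of_norm_deriv_le_mul_norm {f f' : ℝ → F} {K a b : ℝ} (hab : a ≤ b)
    (hf : ∀ s ∈ Icc a b, HasDerivAt f (f' s) s) (hbound : ∀ s ∈ Icc a b, ‖f' s‖ ≤ K * ‖f s‖) :
    f b = 0 ↔ f a = 0 := by
  have forward {g g' : ℝ → F} (hg : ∀ s ∈ Icc a b, HasDerivAt g (g' s) s)
      (hgb : ∀ s ∈ Icc a b, ‖g' s‖ ≤ K * ‖g s‖) (ha : g a = 0) : g b = 0 :=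
    eq_zero_of_abs_deriv_le_mul_abs_self_of_eq_zero_right
      (fun s hs => (hg s hs).continuousAt.continuousWithinAt)
      (fun s hs => (hg s (Ico_subset_Icc_self hs)).hasDerivWithinAt) ha
      (fun s hs => hgb s (Ico_subset_Icc_self hs)) b (right_mem_Icc.2 hab)
  have hrefl : ∀ s ∈ Icc a b, a + b - s ∈ Icc a b := fun s hs =>
    ⟨by linarith [hs.2], by linarith [hs.1]⟩
  refine ⟨fun hb => ?_, forward hf hbound⟩
  -- time reversal `s ↦ a + b - s` turns the backward implication into the forward one
  simpa using forward (g := fun s => f (a + b - s)) (g' := fun s => -f' (a + b - s))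
    (fun s hs => (hf _ (hrefl s hs)).comp_const_sub (a + b) s)
    (fun s hs => by simpa using hbound _ (hrefl s hs)) (by simpa using hb)

end Gronwall

section InvariantFlow

variable {E : Type*} [NormedAddCommGroup E] [NormedSpace ℝ E]

lemma fderiv_apply_eq_zero_of_eventually_const {f : E → ℝ} {γ : ℝ → E} {γ' : E} {s : ℝ}
    (hf : DifferentiableAt ℝ f (γ s)) (hγ : HasDerivAt γ γ' s)
    (hconst : ∀ᶠ r in 𝓝 s, f (γ r) = f (γ s)) : fderiv ℝ f (γ s) γ' = 0 :=
  (hf.hasFDerivAt.comp_hasDerivAt s hγ).unique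
    ((hasDerivAt_const s (f (γ s))).congr_of_eventuallyEq hconst)

lemma fderiv_apply_apply_eq_neg_fderiv_fderiv {f : E → ℝ} (hf : ContDiff ℝ 2 f)
    {A : E →L[ℝ] E} (hA : ∀ y, fderiv ℝ f y (A y) = 0) (y : E) :
    fderiv ℝ f y (A (A y)) = -fderiv ℝ (fderiv ℝ f) y (A y) (A y) := by
  have hdiff : Differentiable ℝ (fderiv ℝ f) :=
    (hf.fderiv_right (m := 1) le_rfl).differentiable one_ne_zero
  have hzero : HasFDerivAt (fun z => fderiv ℝ f z (A z)) (0 : E →L[ℝ] ℝ) y := by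
    simp only [hA]
    exact hasFDerivAt_const 0 y
  have h := congr($(((hdiff y).hasFDerivAt.clm_apply A.hasFDerivAt).unique hzero) (A y))
  simp only [_root_.add_apply, ContinuousLinearMap.comp_apply,
    ContinuousLinearMap.flip_apply, _root_.zero_apply] at h
  linarith

end InvariantFlow

section GradientFlow

variable {E : Type*} [NormedAddCommGroup E] [InnerProductSpace ℝ E] [CompleteSpace E]
  {L : E → ℝ} {A : E →L[ℝ] E} {θ : ℝ → E}

lemma hasDerivAt_norm_sq_apply_of_gradient_flow (hL : ContDiff ℝ 2 L) (hA : IsSelfAdjoint A)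
    (hLA : ∀ y, fderiv ℝ L y (A y) = 0) {s : ℝ} (hθ : HasDerivAt θ (-gradient L (θ s)) s) :
    HasDerivAt (fun r => ‖A (θ r)‖ ^ 2)
      (2 * fderiv ℝ (fderiv ℝ L) (θ s) (A (θ s)) (A (θ s))) s := by
  refine (A.hasFDerivAt.comp_hasDerivAt s hθ).norm_sq.congr_deriv ?_
  have hsymm : ⟪A (θ s), A (gradient L (θ s))⟫ = ⟪A (A (θ s)), gradient L (θ s)⟫ :=
    (hA.isSymmetric _ _).symm
  rw [Function.comp_apply, map_neg, inner_neg_right, hsymm, real_inner_comm, inner_gradient_left,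
    fderiv_apply_apply_eq_neg_fderiv_fderiv hL hLA, neg_neg]

theorem apply_eq_zero_iff_of_gradient_flow (hL : ContDiff ℝ 2 L) (hA : IsSelfAdjoint A)
    (hLA : ∀ y, fderiv ℝ L y (A y) = 0)
    (hflow : ∀ t : ℝ, 0 ≤ t → HasDerivAt θ (-gradient L (θ t)) t) {t : ℝ} (ht : 0 ≤ t) :
    A (θ t) = 0 ↔ A (θ 0) = 0 := by
  have hN (s : ℝ) (hs : s ∈ Icc 0 t) :=
    hasDerivAt_norm_sq_apply_of_gradient_flow hL hA hLA (hflow s hs.1)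
  have hcont : ContinuousOn (fun s => fderiv ℝ (fderiv ℝ L) (θ s)) (Icc 0 t) :=
    ((hL.fderiv_right (m := 1) le_rfl).continuous_fderiv one_ne_zero).comp_continuousOn
      fun s hs => (hflow s hs.1).continuousAt.continuousWithinAt
  obtain ⟨C, hC⟩ := (isCompact_Icc (a := (0 : ℝ)) (b := t)).exists_bound_of_continuousOn
    (f := fun s => fderiv ℝ (fderiv ℝ L) (θ s)) (by exact hcont)
  have hbound : ∀ s ∈ Icc 0 t, ‖2 * fderiv ℝ (fderiv ℝ L) (θ s) (A (θ s)) (A (θ s))‖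
      ≤ 2 * C * ‖‖A (θ s)‖ ^ 2‖ := by
    intro s hs
    calc ‖2 * fderiv ℝ (fderiv ℝ L) (θ s) (A (θ s)) (A (θ s))‖
        ≤ 2 * (‖fderiv ℝ (fderiv ℝ L) (θ s)‖ * ‖A (θ s)‖ * ‖A (θ s)‖) := by
          rw [norm_mul, Real.norm_two]
          gcongr
          exact ContinuousLinearMap.le_opNorm₂ _ _ _
      _ ≤ 2 * C * ‖‖A (θ s)‖ ^ 2‖ := by
          rw [norm_pow, norm_norm]
          have := hC s hs
          nlinarith [norm_nonneg (A (θ s))]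
  simpa using eq_zero_iff_of_norm_deriv_le_mul_norm ht hN hbound

end GradientFlow

namespace Matrix

variable {K m n : Type*} [Field K] [Fintype m] [Fintype n]

lemma rank_eq_rank_of_vecMul_eq_zero_iff {M₁ M₂ : Matrix m n K}
    (h : ∀ x : m → K, x ᵥ* M₁ = 0 ↔ x ᵥ* M₂ = 0) : M₁.rank = M₂.rank := by
  have hker : LinearMap.ker M₁ᵀ.mulVecLin = LinearMap.ker M₂ᵀ.mulVecLin := by
    ext x
    simpa [mulVec_transpose] using h x
  have h₁ := LinearMap.finrank_range_add_finrank_ker M₁ᵀ.mulVecLin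
  have h₂ := LinearMap.finrank_range_add_finrank_ker M₂ᵀ.mulVecLin
  rw [← rank_transpose M₁, ← rank_transpose M₂, rank, rank]
  rw [hker] at h₁
  omega

variable [DecidableEq n]

lemma toEuclideanCLM_diagonal_eq_zero_iff (a : n → ℝ) (y : EuclideanSpace ℝ n) :
    toEuclideanCLM (n := n) (𝕜 := ℝ) (diagonal a) y = 0 ↔ a ᵥ* diagonal (fun i => y i) = 0 := by
  simp [← WithLp.ofLp_eq_zero, funext_iff, mulVec_diagonal, vecMul_diagonal]

lemma isSelfAdjoint_toEuclideanCLM_diagonal (a : n → ℝ) :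
    IsSelfAdjoint (toEuclideanCLM (n := n) (𝕜 := ℝ) (diagonal a)) :=
  (isHermitian_diagonal a).isSelfAdjoint.map _

end Matrix

namespace DagNet

variable (G : DagNet)

lemma rescale_one (v : G.V) (θ : EuclideanSpace ℝ G.Edge) : G.rescale v 1 θ = θ := by
  ext e
  simp [rescale]

lemma hasDerivAt_rescale (v : G.Hidden) (θ : EuclideanSpace ℝ G.Edge) :
    HasDerivAt (fun α => G.rescale v α θ)
      (toEuclideanCLM (n := G.Edge) (𝕜 := ℝ) (diagonal (G.B v)) θ) 1 := by
  have hB : toEuclideanCLM (n := G.Edge) (𝕜 := ℝ) (diagonal (G.B v)) θ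
      = (PiLp.continuousLinearEquiv 2 ℝ (fun _ : G.Edge => ℝ)).symm (fun e => G.B v e * θ e) := by
    ext e
    simp [mulVec_diagonal]
  rw [hB]
  refine (PiLp.continuousLinearEquiv 2 ℝ (fun _ : G.Edge => ℝ)).symm.hasFDerivAt.comp_hasDerivAt
    (1 : ℝ) (hasDerivAt_pi.2 fun e => ?_)
  simp only [B, of_apply]
  split_ifs
  · simpa using (hasDerivAt_id (1 : ℝ)).mul_const (θ e)
  · simpa using (hasDerivAt_inv one_ne_zero).mul_const (θ e)
  · simpa using hasDerivAt_const (1 : ℝ) (θ e)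

variable {G} {L : EuclideanSpace ℝ G.Edge → ℝ}

lemma fderiv_apply_diagonal_B_eq_zero (hL : Differentiable ℝ L)
    (hinv : ∀ v ∈ G.hidden, ∀ α : ℝ, 0 < α → ∀ θ, L (G.rescale v α θ) = L θ)
    (v : G.Hidden) (θ : EuclideanSpace ℝ G.Edge) :
    fderiv ℝ L θ (toEuclideanCLM (n := G.Edge) (𝕜 := ℝ) (diagonal (G.B v)) θ) = 0 := by
  have h := fderiv_apply_eq_zero_of_eventually_const (γ := fun α => G.rescale v α θ) (s := 1)
    (hL _) (G.hasDerivAt_rescale v θ) ?_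
  · rwa [rescale_one] at h
  filter_upwards [eventually_gt_nhds one_pos] with α hα
  rw [hinv v v.2 α hα, hinv v v.2 1 one_pos]

lemma fderiv_apply_diagonal_vecMul_B_eq_zero (hL : Differentiable ℝ L)
    (hinv : ∀ v ∈ G.hidden, ∀ α : ℝ, 0 < α → ∀ θ, L (G.rescale v α θ) = L θ)
    (x : G.Hidden → ℝ) (θ : EuclideanSpace ℝ G.Edge) :
    fderiv ℝ L θ (toEuclideanCLM (n := G.Edge) (𝕜 := ℝ) (diagonal (x ᵥ* G.B)) θ) = 0 := by
  have hsum : diagonal (x ᵥ* G.B) = ∑ v, x v • diagonal (G.B v) := by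
    rw [vecMul_eq_sum]
    exact (map_sum (diagonalLinearMap G.Edge ℝ ℝ) _ _).trans
      (sum_congr rfl fun v _ => map_smul _ _ _)
  simp [hsum, fderiv_apply_diagonal_B_eq_zero hL hinv]

end DagNet

/-- along a gradient-flow trajectory of a `C²` loss invariant
under all rescalings at hidden nodes, the rank of the Jacobian
`B̃ · diag(θ(t))` of the invariant set is conserved for all finite `t ≥ 0`. -/
theorem statement15 (G : DagNet) (L : EuclideanSpace ℝ G.Edge → ℝ)
    (hL : ContDiff ℝ 2 L)
    (hinv : ∀ v ∈ G.hidden, ∀ α : ℝ, 0 < α → ∀ θ : EuclideanSpace ℝ G.Edge,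
      L (G.rescale v α θ) = L θ)
    (θ : ℝ → EuclideanSpace ℝ G.Edge)
    (hflow : ∀ t : ℝ, 0 ≤ t → HasDerivAt θ (-(gradient L (θ t))) t) :
    ∀ t : ℝ, 0 ≤ t →
      (G.B * Matrix.diagonal (fun e => θ t e)).rank
        = (G.B * Matrix.diagonal (fun e => θ 0 e)).rank := by
  intro t ht
  refine Matrix.rank_eq_rank_of_vecMul_eq_zero_iff fun x => ?_
  have hLA := DagNet.fderiv_apply_diagonal_vecMul_B_eq_zero (hL.differentiable two_ne_zero) hinv x
  simpa only [← Matrix.vecMul_vecMul, ← Matrix.toEuclideanCLM_diagonal_eq_zero_iff] using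
    apply_eq_zero_iff_of_gradient_flow hL (Matrix.isSelfAdjoint_toEuclideanCLM_diagonal _) hLA
      hflow ht
end
end
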